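/- Let L₀ and L₁ be Lindblad generators on M_d(ℂ) and suppose the kernel of L₀ is one-dimensional, spanned by a density matrix ρ₀. Let G₀ be the time average of L₀, let L₀⁻¹ : ker G₀ → ker G₀ be the inverse of the restriction of L₀ to ker G₀, and set A = L₀⁻¹ ∘ (id − G₀) ∘ L₁. Then there exists ε₀ > 0 such that for all 0 < ε < ε₀: the series ρ(ε) = Σ_{n≥0} (−ε)ⁿ Aⁿ[ρ₀] converges, Tr(ρ(ε)) = 1, (L₀ + εL₁)[ρ(ε)] = 0, the kernel of L₀ + εL₁ is one-dimensional, and ρ(ε) is the unique stationary density matrix of L₀ + εL₁. -/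

import Mathlib

open Matrix Filter
open scoped ComplexOrder

attribute [local instance] Matrix.frobeniusNormedAddCommGroup Matrix.frobeniusNormedSpace

variable {d : ℕ}

/-- The Lindblad generator built from `H` and Kraus operators `h`. -/
noncomputable def lindbladOf (H : Matrix (Fin d) (Fin d) ℂ) {n : ℕ}
    (h : Fin n → Matrix (Fin d) (Fin d) ℂ) :
    Matrix (Fin d) (Fin d) ℂ →ₗ[ℂ] Matrix (Fin d) (Fin d) ℂ :=
  (-Complex.I) • (LinearMap.mulLeft ℂ H - LinearMap.mulRight ℂ H) +
    ∑ α, ((LinearMap.mulLeft ℂ (h α)).comp (LinearMap.mulRight ℂ (h α)ᴴ)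
      - ((1 : ℂ)/2) • (LinearMap.mulLeft ℂ ((h α)ᴴ * h α) + LinearMap.mulRight ℂ ((h α)ᴴ * h α)))

/-- `L` is a Lindblad generator. -/
def IsLindblad (L : Matrix (Fin d) (Fin d) ℂ →ₗ[ℂ] Matrix (Fin d) (Fin d) ℂ) : Prop :=
  ∃ (H : Matrix (Fin d) (Fin d) ℂ) (n : ℕ) (h : Fin n → Matrix (Fin d) (Fin d) ℂ),
    H.IsHermitian ∧ L = lindbladOf H h

/-- `exp (t L)` as a map on matrices. -/
noncomputable def expL (L : Matrix (Fin d) (Fin d) ℂ →ₗ[ℂ] Matrix (Fin d) (Fin d) ℂ) (t : ℝ) :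
    Matrix (Fin d) (Fin d) ℂ →L[ℂ] Matrix (Fin d) (Fin d) ℂ :=
  haveI : IsTopologicalRing (Matrix (Fin d) (Fin d) ℂ →L[ℂ] Matrix (Fin d) (Fin d) ℂ) := by
    exact @NonUnitalSeminormedRing.toIsTopologicalRing _
      (ContinuousLinearMap.toNormedRing (𝕜 := ℂ)).toNonUnitalNormedRing.toNonUnitalSeminormedRing
  NormedSpace.exp ((t : ℂ) • LinearMap.toContinuousLinearMap L)

/-- `G` is the time average (Cesàro mean) of the semigroup generated by `L`. -/
def IsTimeAverage (L G : Matrix (Fin d) (Fin d) ℂ →ₗ[ℂ] Matrix (Fin d) (Fin d) ℂ) : Prop :=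
  ∀ X, Tendsto (fun T : ℝ => T⁻¹ • ∫ t in (0:ℝ)..T, expL L t X) atTop (nhds (G X))

/-!
Since `G₀` is a time average, it annihilates `range L₀` and fixes `ker L₀ = span {ρ₀}`. Lindblad
generators are trace-annihilating, so rank–nullity gives `range L₀ = ker tr`, and therefore
`G₀ X = tr X • ρ₀`. Hence `L₀ ∘ A = L₁` and `tr ∘ A = 0`, that is, `L₀ + ε L₁ = L₀ ∘ (1 + ε A)`.
For small `ε` the operator `1 + ε A` is invertible with inverse the Neumann series
`∑ (-ε)ⁿ Aⁿ`, so `ker (L₀ + ε L₁)` is spanned by `ρ(ε) = (1 + ε A)⁻¹ ρ₀`, and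
`tr ρ(ε) = tr ((1 + ε A) ρ(ε)) = tr ρ₀ = 1`.
-/

open Topology

theorem LinearMap.ker_comp_eq_span_singleton {R U V W : Type*} [Semiring R] [AddCommMonoid U]
    [AddCommMonoid V] [AddCommMonoid W] [Module R U] [Module R V] [Module R W]
    {L : V →ₗ[R] W} {T : U →ₗ[R] V} {ρ : V} {σ : U}
    (hker : LinearMap.ker L = Submodule.span R {ρ}) (hT : Function.Injective T) (hσ : T σ = ρ) :
    LinearMap.ker (L ∘ₗ T) = Submodule.span R {σ} := by
  ext x
  simp only [LinearMap.ker_comp, Submodule.mem_comap, hker, Submodule.mem_span_singleton, ← hσ,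
    ← map_smul]
  exact exists_congr fun a => hT.eq_iff

section TraceProjection

variable {K V : Type*} [Field K] [AddCommGroup V] [Module K V] {τ : V →ₗ[K] K} {ρ : V}

theorem LinearMap.range_eq_ker_of_ker_eq_span_singleton [FiniteDimensional K V] {L : V →ₗ[K] V}
    (hτL : τ ∘ₗ L = 0) (hτρ : τ ρ ≠ 0) (hker : LinearMap.ker L = Submodule.span K {ρ}) :
    LinearMap.range L = LinearMap.ker τ := by
  have hρ : ρ ≠ 0 := fun h => hτρ (by rw [h, map_zero])
  refine Submodule.eq_of_le_of_finrank_eq (LinearMap.range_le_ker_iff.mpr hτL) ?_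
  have hL := LinearMap.finrank_range_add_finrank_ker L
  have hτ := LinearMap.finrank_range_add_finrank_ker τ
  rw [hker, finrank_span_singleton hρ] at hL
  rw [LinearMap.range_eq_top.mpr (τ.surjective_of_ne_zero ?_), finrank_top,
    Module.finrank_self] at hτ
  · omega
  · exact fun h => hτρ (by rw [h, LinearMap.zero_apply])

theorem LinearMap.eq_smulRight_of_comp_eq_zero [FiniteDimensional K V] {L G : V →ₗ[K] V}
    (hτL : τ ∘ₗ L = 0) (hτρ : τ ρ = 1) (hker : LinearMap.ker L = Submodule.span K {ρ})
    (hGL : G ∘ₗ L = 0) (hGρ : G ρ = ρ) : G = τ.smulRight ρ := by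
  ext X
  have hX : X - τ X • ρ ∈ LinearMap.range L := by
    rw [LinearMap.range_eq_ker_of_ker_eq_span_singleton hτL (by simp [hτρ]) hker,
      LinearMap.mem_ker, map_sub, map_smul, hτρ, smul_eq_mul, mul_one, sub_self]
  obtain ⟨Y, hY⟩ := hX
  have hGY : G (L Y) = 0 := LinearMap.congr_fun hGL Y
  rw [hY, map_sub, map_smul, hGρ, sub_eq_zero] at hGY
  simpa using hGY

variable {L₀ L₁ B : V →ₗ[K] V}

theorem LinearMap.sub_smulRight_comp_of_comp_eq_zero (hτL₁ : τ ∘ₗ L₁ = 0) :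
    (LinearMap.id - τ.smulRight ρ) ∘ₗ L₁ = L₁ := by
  ext X
  have hX : τ (L₁ X) = 0 := LinearMap.congr_fun hτL₁ X
  simp [hX]

theorem LinearMap.comp_comp_sub_smulRight_comp (hτL₁ : τ ∘ₗ L₁ = 0)
    (hB : ∀ X ∈ LinearMap.ker (τ.smulRight ρ), L₀ (B X) = X) :
    L₀ ∘ₗ B ∘ₗ (LinearMap.id - τ.smulRight ρ) ∘ₗ L₁ = L₁ := by
  rw [LinearMap.sub_smulRight_comp_of_comp_eq_zero hτL₁]
  ext X
  have hX : τ (L₁ X) = 0 := LinearMap.congr_fun hτL₁ X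
  exact hB (L₁ X) (by simp [hX])

theorem LinearMap.comp_comp_sub_smulRight_comp_eq_zero (hτL₁ : τ ∘ₗ L₁ = 0)
    (hB : ∀ X ∈ LinearMap.ker (τ.smulRight ρ), B X ∈ LinearMap.ker (τ.smulRight ρ))
    (hρ : ρ ≠ 0) : τ ∘ₗ B ∘ₗ (LinearMap.id - τ.smulRight ρ) ∘ₗ L₁ = 0 := by
  rw [LinearMap.sub_smulRight_comp_of_comp_eq_zero hτL₁]
  ext X
  have hX : τ (L₁ X) = 0 := LinearMap.congr_fun hτL₁ X
  simpa [hρ] using hB (L₁ X) (by simp [hX])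

end TraceProjection

section Neumann

variable {𝕜 E : Type*} [NontriviallyNormedField 𝕜] [NormedAddCommGroup E] [NormedSpace 𝕜 E]

namespace ContinuousLinearMap

variable [CompleteSpace E] (A : E →L[𝕜] E) {c : 𝕜}

theorem injective_one_add_smul (h : ‖c • A‖ < 1) : Function.Injective ⇑(1 + c • A) := by
  have hinv := geom_series_mul_neg (-(c • A)) (by rwa [norm_neg])
  rw [sub_neg_eq_add] at hinv
  exact Function.LeftInverse.injective (g := ⇑(∑' n, (-(c • A)) ^ n)) fun x => by
    rw [← mul_apply_eq_comp, hinv, one_apply_eq_self]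

theorem hasSum_neg_smul_pow_apply (h : ‖c • A‖ < 1) (v : E) :
    HasSum (fun n : ℕ => (-c) ^ n • (A ^ n) v) ((∑' n, (-(c • A)) ^ n) v) := by
  have hsum := (summable_geometric_of_norm_lt_one (x := -(c • A))
    (by rwa [norm_neg])).hasSum.mapL (apply 𝕜 E v)
  simpa only [apply_apply, ← neg_smul, smul_pow, _root_.smul_apply] using hsum

theorem one_add_smul_apply_tsum_neg_smul_pow_apply (h : ‖c • A‖ < 1) (v : E) :
    (1 + c • A) (∑' n : ℕ, (-c) ^ n • (A ^ n) v) = v := by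
  have hinv := mul_neg_geom_series (-(c • A)) (by rwa [norm_neg])
  rw [sub_neg_eq_add] at hinv
  rw [(hasSum_neg_smul_pow_apply A h v).tsum_eq, ← mul_apply_eq_comp, hinv, one_apply_eq_self]

end ContinuousLinearMap

variable [CompleteSpace 𝕜] [FiniteDimensional 𝕜 E]

theorem Module.End.eventually_neumann (A : Module.End 𝕜 E) :
    ∀ᶠ c in 𝓝 (0 : 𝕜), Function.Injective ⇑(1 + c • A : Module.End 𝕜 E) ∧
      ∀ v, Summable (fun n : ℕ => (-c) ^ n • (A ^ n) v) ∧
        (1 + c • A) (∑' n : ℕ, (-c) ^ n • (A ^ n) v) = v := by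
  have := FiniteDimensional.complete 𝕜 E
  set A' := LinearMap.toContinuousLinearMap A
  have hsmall : ∀ᶠ c in 𝓝 (0 : 𝕜), ‖c • A'‖ < 1 := by
    have : Tendsto (fun c : 𝕜 => ‖c • A'‖) (𝓝 0) (𝓝 ‖(0 : 𝕜) • A'‖) :=
      ((continuous_id.smul continuous_const).tendsto 0).norm
    rw [zero_smul, norm_zero] at this
    exact this.eventually_lt_const one_pos
  have hpow (n : ℕ) (v : E) : (A' ^ n) v = (A ^ n) v := by
    rw [← ContinuousLinearMap.coe_coe, ContinuousLinearMap.toLinearMap_pow]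
    rfl
  filter_upwards [hsmall] with c hc
  refine ⟨A'.injective_one_add_smul hc, fun v => ⟨?_, ?_⟩⟩
  · simpa only [hpow] using (A'.hasSum_neg_smul_pow_apply hc v).summable
  · have hv := A'.one_add_smul_apply_tsum_neg_smul_pow_apply hc v
    simp only [hpow] at hv
    exact hv

theorem Module.End.eventually_ker_add_smul_eq_span_tsum {L₀ L₁ A : Module.End 𝕜 E}
    {τ : E →ₗ[𝕜] 𝕜} {ρ : E} (hker : LinearMap.ker L₀ = Submodule.span 𝕜 {ρ}) (hτρ : τ ρ = 1)
    (hL₀A : L₀ ∘ₗ A = L₁) (hτA : τ ∘ₗ A = 0) :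
    ∀ᶠ c in 𝓝 (0 : 𝕜), Summable (fun n : ℕ => (-c) ^ n • (A ^ n) ρ) ∧
      τ (∑' n : ℕ, (-c) ^ n • (A ^ n) ρ) = 1 ∧
      LinearMap.ker (L₀ + c • L₁) = Submodule.span 𝕜 {∑' n : ℕ, (-c) ^ n • (A ^ n) ρ} := by
  filter_upwards [A.eventually_neumann] with c ⟨hinj, hneumann⟩
  obtain ⟨hsum, hS⟩ := hneumann ρ
  have hLT : L₀ + c • L₁ = L₀ ∘ₗ (1 + c • A) := by
    rw [LinearMap.comp_add, LinearMap.comp_smul, hL₀A, Module.End.one_eq_id, LinearMap.comp_id]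
  have hτT : τ ∘ₗ (1 + c • A) = τ := by
    rw [LinearMap.comp_add, LinearMap.comp_smul, hτA, smul_zero, add_zero, Module.End.one_eq_id,
      LinearMap.comp_id]
  refine ⟨hsum, ?_, hLT ▸ LinearMap.ker_comp_eq_span_singleton hker hinj hS⟩
  have hτS := LinearMap.congr_fun hτT (∑' n : ℕ, (-c) ^ n • (A ^ n) ρ)
  rw [LinearMap.comp_apply, hS, hτρ] at hτS
  exact hτS.symm

end Neumann

theorem Filter.Tendsto.inv_smul_comp_add_const {E : Type*} [NormedAddCommGroup E]
    [NormedSpace ℝ E] {F : ℝ → E} {g : E} (h : Tendsto (fun T => T⁻¹ • F T) atTop (𝓝 g))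
    (s : ℝ) : Tendsto (fun T => T⁻¹ • F (T + s)) atTop (𝓝 g) := by
  have hratio : Tendsto (fun T : ℝ => T⁻¹ * (T + s)) atTop (𝓝 1) := by
    have : Tendsto (fun T : ℝ => 1 + s * T⁻¹) atTop (𝓝 (1 + s * 0)) :=
      tendsto_const_nhds.add (tendsto_const_nhds.mul tendsto_inv_atTop_zero)
    rw [mul_zero, add_zero] at this
    refine this.congr' ?_
    filter_upwards [eventually_ne_atTop 0] with T hT
    field_simp
  have := hratio.smul (h.comp (tendsto_atTop_add_const_right atTop s tendsto_id))
  rw [one_smul] at this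
  refine this.congr' ?_
  filter_upwards [eventually_gt_atTop (-s)] with T hT
  simp only [Function.comp_apply, id, smul_smul, mul_assoc,
    mul_inv_cancel₀ (show T + s ≠ 0 by linarith), mul_one]

section Semigroup

open NormedSpace ContinuousLinearMap

variable {E : Type*} [NormedAddCommGroup E] [NormedSpace ℂ E]

def IsExpTimeAverage (M G : E →L[ℂ] E) : Prop :=
  ∀ X, Tendsto (fun T : ℝ => T⁻¹ • ∫ t in (0 : ℝ)..T, exp ((t : ℂ) • M) X) atTop (𝓝 (G X))

variable [CompleteSpace E] (M : E →L[ℂ] E)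

theorem exp_ofReal_add_smul (t s : ℝ) :
    exp (((t + s : ℝ) : ℂ) • M) = exp ((t : ℂ) • M) * exp ((s : ℂ) • M) := by
  have hball (x : E →L[ℂ] E) : x ∈ Metric.eball 0 (expSeries ℂ (E →L[ℂ] E)).radius :=
    (expSeries_radius_eq_top ℂ (E →L[ℂ] E)).symm ▸ edist_lt_top _ _
  rw [Complex.ofReal_add, add_smul]
  exact exp_add_of_commute_of_mem_ball ((Commute.refl M).smul_left _ |>.smul_right _)
    (hball _) (hball _)

theorem continuous_exp_ofReal_smul_apply (X : E) :
    Continuous fun t : ℝ => exp ((t : ℂ) • M) X := by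
  have hexp : Continuous (exp : (E →L[ℂ] E) → E →L[ℂ] E) :=
    continuous_iff_continuousAt.mpr fun x => (exp_analytic (𝕂 := ℂ) x).continuousAt
  exact (apply ℂ E X).continuous.comp <|
    hexp.comp (Complex.continuous_ofReal.smul continuous_const)

theorem hasDerivAt_exp_ofReal_smul_zero :
    HasDerivAt (fun t : ℝ => exp ((t : ℂ) • M)) M 0 := by
  have h := ((hasDerivAt_exp_smul_const M ((0 : ℝ) : ℂ)).hasFDerivAt.restrictScalars ℝ)
    |>.comp_hasDerivAt (0 : ℝ) Complex.ofRealCLM.hasDerivAt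
  simp only [Complex.ofReal_zero, zero_smul, exp_zero, one_mul, Complex.ofRealCLM_apply,
    Complex.ofReal_one, coe_restrictScalars', toSpanSingleton_apply, one_smul] at h
  exact h

theorem hasDerivAt_exp_ofReal_smul_apply_zero (X : E) :
    HasDerivAt (fun t : ℝ => exp ((t : ℂ) • M) X) (M X) 0 :=
  ((apply ℂ E X).restrictScalars ℝ).hasFDerivAt.comp_hasDerivAt 0
    (hasDerivAt_exp_ofReal_smul_zero M)

theorem exp_smul_apply_of_apply_eq_zero {v : E} (hv : M v = 0) (c : ℂ) :
    exp (c • M) v = v := by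
  have h := (exp_series_hasSum_exp' (𝕂 := ℂ) (c • M)).mapL (apply ℂ E v)
  refine (h.unique (hasSum_single 0 fun n hn => ?_)).trans ?_
  · obtain ⟨k, rfl⟩ := Nat.exists_eq_succ_of_ne_zero hn
    rw [apply_apply, _root_.smul_apply, pow_succ, mul_apply_eq_comp, _root_.smul_apply, hv,
      smul_zero, map_zero, smul_zero]
  · simp

namespace IsExpTimeAverage

variable {M} {G : E →L[ℂ] E} (hG : IsExpTimeAverage M G)
include hG

theorem apply_exp_smul_apply (s : ℝ) (X : E) : G (exp ((s : ℂ) • M) X) = G X := by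
  set F : ℝ → E := fun T => ∫ t in (0 : ℝ)..T, exp ((t : ℂ) • M) X
  have hF (T : ℝ) :
      ∫ t in (0 : ℝ)..T, exp ((t : ℂ) • M) (exp ((s : ℂ) • M) X) = F (T + s) - F s := by
    have hint (a b : ℝ) :=
      (continuous_exp_ofReal_smul_apply M X).intervalIntegrable (μ := MeasureTheory.volume) a b
    simp_rw [← mul_apply_eq_comp, ← exp_ofReal_add_smul]
    rw [intervalIntegral.integral_comp_add_right (fun t => exp ((t : ℂ) • M) X), zero_add,
      intervalIntegral.integral_interval_sub_left (hint 0 (T + s)) (hint 0 s)]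
  refine tendsto_nhds_unique (hG _) ?_
  have hsub := ((hG X).inv_smul_comp_add_const s).sub (tendsto_inv_atTop_zero.smul_const (F s))
  rw [zero_smul, sub_zero] at hsub
  simpa only [hF, smul_sub] using hsub

theorem apply_apply_eq_zero (X : E) : G (M X) = 0 := by
  have hd := (G.restrictScalars ℝ).hasFDerivAt.comp_hasDerivAt 0
    (hasDerivAt_exp_ofReal_smul_apply_zero M X)
  have hconst : (G.restrictScalars ℝ ∘ fun t : ℝ => exp ((t : ℂ) • M) X) = fun _ => G X :=
    funext fun s => hG.apply_exp_smul_apply s X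
  rw [hconst] at hd
  exact hd.unique (hasDerivAt_const 0 (G X))

theorem apply_eq_self_of_apply_eq_zero {v : E} (hv : M v = 0) : G v = v := by
  refine tendsto_nhds_unique (hG v) (tendsto_const_nhds.congr' ?_)
  filter_upwards [eventually_ne_atTop 0] with T hT
  simp only [exp_smul_apply_of_apply_eq_zero M hv, intervalIntegral.integral_const, sub_zero,
    smul_smul, inv_mul_cancel₀ hT, one_smul]

end IsExpTimeAverage

end Semigroup

theorem IsLindblad.traceLinearMap_comp
    {L : Matrix (Fin d) (Fin d) ℂ →ₗ[ℂ] Matrix (Fin d) (Fin d) ℂ} (hL : IsLindblad L) :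
    traceLinearMap (Fin d) ℂ ℂ ∘ₗ L = 0 := by
  obtain ⟨H, n, h, -, rfl⟩ := hL
  ext X : 1
  have hcycle (α : Fin n) : ((h α)ᴴ * (h α * X)).trace = (h α * (X * (h α)ᴴ)).trace := by
    rw [← mul_assoc, trace_mul_comm, trace_mul_comm (h α), mul_assoc]
  simp [lindbladOf, trace_mul_comm H X, hcycle, trace_mul_comm (X * _), ← two_mul]

theorem IsTimeAverage.isExpTimeAverage
    {L G : Matrix (Fin d) (Fin d) ℂ →ₗ[ℂ] Matrix (Fin d) (Fin d) ℂ} (hG : IsTimeAverage L G) :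
    IsExpTimeAverage (LinearMap.toContinuousLinearMap L) (LinearMap.toContinuousLinearMap G) :=
  hG

theorem IsTimeAverage.eq_smulRight_traceLinearMap
    {L G : Matrix (Fin d) (Fin d) ℂ →ₗ[ℂ] Matrix (Fin d) (Fin d) ℂ} {ρ : Matrix (Fin d) (Fin d) ℂ}
    (hG : IsTimeAverage L G) (hL : IsLindblad L) (hρ : ρ.trace = 1)
    (hker : LinearMap.ker L = Submodule.span ℂ {ρ}) :
    G = (traceLinearMap (Fin d) ℂ ℂ).smulRight ρ := by
  have hLρ : L ρ = 0 := by
    rw [← LinearMap.mem_ker, hker]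
    exact Submodule.mem_span_singleton_self ρ
  exact LinearMap.eq_smulRight_of_comp_eq_zero hL.traceLinearMap_comp hρ hker
    (LinearMap.ext hG.isExpTimeAverage.apply_apply_eq_zero)
    (hG.isExpTimeAverage.apply_eq_self_of_apply_eq_zero hLρ)

theorem stmt10_general (d : ℕ)
    (L₀ L₁ G₀ : Matrix (Fin d) (Fin d) ℂ →ₗ[ℂ] Matrix (Fin d) (Fin d) ℂ)
    (hL₀ : IsLindblad L₀) (hL₁ : IsLindblad L₁) (hG₀ : IsTimeAverage L₀ G₀)
    (ρ₀ : Matrix (Fin d) (Fin d) ℂ) (hρ₀tr : ρ₀.trace = 1)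
    (hker : LinearMap.ker L₀ = Submodule.span ℂ {ρ₀})
    -- `B` is the inverse of the restriction of `L₀` to `ker G₀`
    (B : Matrix (Fin d) (Fin d) ℂ →ₗ[ℂ] Matrix (Fin d) (Fin d) ℂ)
    (hB : ∀ X ∈ LinearMap.ker G₀,
      B X ∈ LinearMap.ker G₀ ∧ L₀ (B X) = X ∧ B (L₀ X) = X) :
    -- with `A = L₀⁻¹ ∘ (id − G₀) ∘ L₁`:
    ∀ A : Matrix (Fin d) (Fin d) ℂ →ₗ[ℂ] Matrix (Fin d) (Fin d) ℂ,
      A = B ∘ₗ (LinearMap.id - G₀) ∘ₗ L₁ →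
    ∃ ε₀ : ℝ, 0 < ε₀ ∧ ∀ ε : ℝ, 0 < ε → ε < ε₀ →
      Summable (fun n : ℕ => ((-ε : ℂ)) ^ n • (A ^ n) ρ₀) ∧
      (∑' n : ℕ, ((-ε : ℂ)) ^ n • (A ^ n) ρ₀).trace = 1 ∧
      (L₀ + (ε : ℂ) • L₁) (∑' n : ℕ, ((-ε : ℂ)) ^ n • (A ^ n) ρ₀) = 0 ∧
      Module.finrank ℂ (LinearMap.ker (L₀ + (ε : ℂ) • L₁)) = 1 ∧
      ∀ σ : Matrix (Fin d) (Fin d) ℂ, σ.PosSemidef → σ.trace = 1 →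
        (L₀ + (ε : ℂ) • L₁) σ = 0 → σ = ∑' n : ℕ, ((-ε : ℂ)) ^ n • (A ^ n) ρ₀ := by
  intro A hA
  have hρ₀ : ρ₀ ≠ 0 := by rintro rfl; simp at hρ₀tr
  subst hA
  rw [hG₀.eq_smulRight_traceLinearMap hL₀ hρ₀tr hker] at hB ⊢
  have hτL₁ := hL₁.traceLinearMap_comp
  obtain ⟨ε₀, hε₀, hsmall⟩ := Metric.eventually_nhds_iff.mp <|
    (Complex.continuous_ofReal.tendsto' 0 0 Complex.ofReal_zero).eventually <|
      Module.End.eventually_ker_add_smul_eq_span_tsum hker hρ₀tr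
        (LinearMap.comp_comp_sub_smulRight_comp hτL₁ fun X hX => (hB X hX).2.1)
        (LinearMap.comp_comp_sub_smulRight_comp_eq_zero hτL₁ (fun X hX => (hB X hX).1) hρ₀)
  refine ⟨ε₀, hε₀, fun ε hε hεε₀ => ?_⟩
  obtain ⟨hsum, htrS, hkerS⟩ := hsmall (by rwa [Real.dist_0_eq_abs, abs_of_pos hε])
  refine ⟨hsum, htrS, ?_, ?_, fun σ _ hσtr hσ => ?_⟩
  · rw [← LinearMap.mem_ker, hkerS]
    exact Submodule.mem_span_singleton_self _
  · rw [hkerS, finrank_span_singleton]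
    rintro h
    simp [h] at htrS
  · rw [← LinearMap.mem_ker, hkerS] at hσ
    obtain ⟨a, rfl⟩ := Submodule.mem_span_singleton.mp hσ
    rw [traceLinearMap_apply] at htrS
    rw [trace_smul, htrS, smul_eq_mul, mul_one] at hσtr
    rw [hσtr]
    exact one_smul ℂ _

theorem stmt10 (d : ℕ) (hd : 1 ≤ d)
    (L₀ L₁ G₀ : Matrix (Fin d) (Fin d) ℂ →ₗ[ℂ] Matrix (Fin d) (Fin d) ℂ)
    (hL₀ : IsLindblad L₀) (hL₁ : IsLindblad L₁) (hG₀ : IsTimeAverage L₀ G₀)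
    (ρ₀ : Matrix (Fin d) (Fin d) ℂ) (hρ₀ : ρ₀.PosSemidef) (hρ₀tr : ρ₀.trace = 1)
    (hker : LinearMap.ker L₀ = Submodule.span ℂ {ρ₀})
    -- `B` is the inverse of the restriction of `L₀` to `ker G₀`
    (B : Matrix (Fin d) (Fin d) ℂ →ₗ[ℂ] Matrix (Fin d) (Fin d) ℂ)
    (hB : ∀ X ∈ LinearMap.ker G₀,
      B X ∈ LinearMap.ker G₀ ∧ L₀ (B X) = X ∧ B (L₀ X) = X) :
    -- with `A = L₀⁻¹ ∘ (id − G₀) ∘ L₁`: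
    ∀ A : Matrix (Fin d) (Fin d) ℂ →ₗ[ℂ] Matrix (Fin d) (Fin d) ℂ,
      A = B ∘ₗ (LinearMap.id - G₀) ∘ₗ L₁ →
    ∃ ε₀ : ℝ, 0 < ε₀ ∧ ∀ ε : ℝ, 0 < ε → ε < ε₀ →
      Summable (fun n : ℕ => ((-ε : ℂ)) ^ n • (A ^ n) ρ₀) ∧
      (∑' n : ℕ, ((-ε : ℂ)) ^ n • (A ^ n) ρ₀).trace = 1 ∧
      (L₀ + (ε : ℂ) • L₁) (∑' n : ℕ, ((-ε : ℂ)) ^ n • (A ^ n) ρ₀) = 0 ∧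
      Module.finrank ℂ (LinearMap.ker (L₀ + (ε : ℂ) • L₁)) = 1 ∧
      ∀ σ : Matrix (Fin d) (Fin d) ℂ, σ.PosSemidef → σ.trace = 1 →
        (L₀ + (ε : ℂ) • L₁) σ = 0 → σ = ∑' n : ℕ, ((-ε : ℂ)) ^ n • (A ^ n) ρ₀ :=
  stmt10_general d L₀ L₁ G₀ hL₀ hL₁ hG₀ ρ₀ hρ₀tr hker B hB
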